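/- Let σ : SL(2,ℤ) → SL(2,ℤ) be the group automorphism sending [[a,b],[c,d]] to [[a,-b],[-c,d]] (conjugation by diag(-1,1)). Then the image of G₁ under σ equals the conjugate subgroup T·G₁·T⁻¹. -/

import Mathlib

open Matrix

/-- `SL(2,ℤ)`, the group of 2×2 integer matrices of determinant 1. -/
abbrev SL2Z := Matrix.SpecialLinearGroup (Fin 2) ℤ

/-- The matrix `T = [[1,1],[0,1]]` in `SL(2,ℤ)`. -/
def Tmat : SL2Z := ⟨!![1, 1; 0, 1], by norm_num [Matrix.det_fin_two_of]⟩

/-- The subgroup `G₁` of `SL(2,ℤ)`. -/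
def G1 : Subgroup SL2Z :=
  Subgroup.closure
    { (⟨!![1, 4; 0, 1], by norm_num [Matrix.det_fin_two_of]⟩ : SL2Z),
      ⟨!![3, -5; 2, -3], by norm_num [Matrix.det_fin_two_of]⟩,
      ⟨!![0, -1; 1, 1], by norm_num [Matrix.det_fin_two_of]⟩ }

/-! With `A = T⁴`, `B` and `R` the generators of `G₁`: `T` commutes with `A`, and a direct
computation gives `σ A = A⁻¹`, `σ B = A⁻¹ (T B T⁻¹)⁻¹ A`, `σ R = (T R T⁻¹)⁻¹`. These three
elements generate the same subgroup as `A`, `T B T⁻¹`, `T R T⁻¹`, the generators of `T G₁ T⁻¹`. -/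

theorem Subgroup.closure_inv_conj_inv {G : Type*} [Group G] (a b c : G) :
    closure {a⁻¹, a⁻¹ * b⁻¹ * a, c⁻¹} = closure {a, b, c} := by
  apply le_antisymm <;> rw [closure_le] <;>
    simp only [Set.insert_subset_iff, Set.singleton_subset_iff, SetLike.mem_coe]
  · have ha : a ∈ closure {a, b, c} := subset_closure (by simp)
    have hb : b ∈ closure {a, b, c} := subset_closure (by simp)
    have hc : c ∈ closure {a, b, c} := subset_closure (by simp)
    exact ⟨inv_mem ha, mul_mem (mul_mem (inv_mem ha) (inv_mem hb)) ha, inv_mem hc⟩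
  · set H := closure {a⁻¹, a⁻¹ * b⁻¹ * a, c⁻¹}
    have ha : a ∈ H := inv_inv a ▸ inv_mem (subset_closure (by simp))
    have hconj : a⁻¹ * b⁻¹ * a ∈ H := subset_closure (by simp)
    have hc : c ∈ H := inv_inv c ▸ inv_mem (subset_closure (by simp))
    refine ⟨ha, ?_, hc⟩
    have hb_eq : b = (a * (a⁻¹ * b⁻¹ * a) * a⁻¹)⁻¹ := by group
    rw [hb_eq]
    exact inv_mem (mul_mem (mul_mem ha hconj) (inv_mem ha))

def genA : SL2Z := ⟨!![1, 4; 0, 1], by norm_num [Matrix.det_fin_two_of]⟩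
def genB : SL2Z := ⟨!![3, -5; 2, -3], by norm_num [Matrix.det_fin_two_of]⟩
def genR : SL2Z := ⟨!![0, -1; 1, 1], by norm_num [Matrix.det_fin_two_of]⟩

theorem G1_eq_closure : G1 = Subgroup.closure {genA, genB, genR} := rfl

theorem conj_Tmat_genA : Tmat * genA * Tmat⁻¹ = genA := by
  apply Subtype.ext
  simp only [Matrix.SpecialLinearGroup.coe_mul, Matrix.SpecialLinearGroup.coe_inv]
  simp [Tmat, genA, Matrix.adjugate_fin_two]

section Sigma

variable (σ : SL2Z ≃* SL2Z)
  (hσ : ∀ g : SL2Z,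
    ((σ g : SL2Z) : Matrix (Fin 2) (Fin 2) ℤ) = !![g 0 0, -(g 0 1); -(g 1 0), g 1 1])
include hσ

theorem sigma_genA : σ genA = genA⁻¹ := by
  apply Subtype.ext
  simp only [hσ, Matrix.SpecialLinearGroup.coe_inv]
  simp [genA, Matrix.adjugate_fin_two]

theorem sigma_genB : σ genB = genA⁻¹ * (Tmat * genB * Tmat⁻¹)⁻¹ * genA := by
  apply Subtype.ext
  simp only [hσ, Matrix.SpecialLinearGroup.coe_mul, Matrix.SpecialLinearGroup.coe_inv]
  simp [Tmat, genA, genB, Matrix.adjugate_fin_two]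

theorem sigma_genR : σ genR = (Tmat * genR * Tmat⁻¹)⁻¹ := by
  apply Subtype.ext
  simp only [hσ, Matrix.SpecialLinearGroup.coe_mul, Matrix.SpecialLinearGroup.coe_inv]
  simp [Tmat, genR, Matrix.adjugate_fin_two]

end Sigma

/-- If `σ` is the group automorphism of `SL(2,ℤ)` sending `[[a,b],[c,d]]` to
`[[a,-b],[-c,d]]` (conjugation by `diag(-1,1)`), then `σ(G₁) = T·G₁·T⁻¹`. -/
theorem sigma_G1_eq_conj (σ : SL2Z ≃* SL2Z)
    (hσ : ∀ g : SL2Z,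
      ((σ g : SL2Z) : Matrix (Fin 2) (Fin 2) ℤ) = !![g 0 0, -(g 0 1); -(g 1 0), g 1 1]) :
    Subgroup.map σ.toMonoidHom G1 = Subgroup.map (MulAut.conj Tmat).toMonoidHom G1 := by
  simp only [G1_eq_closure, MonoidHom.map_closure, MulEquiv.coe_toMonoidHom,
    Set.image_insert_eq, Set.image_singleton, sigma_genA σ hσ, sigma_genB σ hσ, sigma_genR σ hσ,
    MulAut.conj_apply, conj_Tmat_genA]
  exact Subgroup.closure_inv_conj_inv _ _ _
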